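/- Let Δ = {α_{i_1},…,α_{i_{n+1}}} be an n-simplex (the α's affinely independent in ℝ^n) and let N_Δ ∈ ℝ^{n×(n+1)} be a matrix whose kernel is one-dimensional and meets the positive orthant ℝ^{n+1}_{>0} (i.e. N positively decorates Δ). Then the system N_Δ x^{A_Δ} = 0, where A_Δ has columns α_{i_1},…,α_{i_{n+1}}, has exactly one solution in ℝ^n_{>0}, and this solution is non-degenerate (the Jacobian at it is invertible). -/

import Mathlib

/-!
In logarithmic coordinates `x = exp y` the monomials become `exp (α j ⬝ᵥ y)`. Since `ker N` is
spanned by the positive vector `v`, a positive zero of `x ↦ N x^α` is therefore exactly a `y`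
with `α j ⬝ᵥ y = t + log (v j)` for some `t`. For `n + 1` affinely independent exponents the
linear map `(y, t) ↦ (α j ⬝ᵥ y + t)ⱼ` from `ℝⁿ × ℝ` to `ℝⁿ⁺¹` is injective, hence bijective,
which gives existence and uniqueness. At a zero the monomial vector is `c • v` with `c > 0`, so
the Jacobian is `c • N diag(v) A diag(x⁻¹)` with `A = of α`; and `N diag(v) A y = 0` forces
`A y` to be a multiple of the all-ones vector, hence `y = 0`.
-/

open Matrix Real

namespace AffineIndependent

variable {n : ℕ} {α : Fin (n + 1) → Fin n → ℝ}

theorem eq_zero_of_forall_dotProduct_eq (hα : AffineIndependent ℝ α) {y : Fin n → ℝ} {t : ℝ}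
    (h : ∀ j, α j ⬝ᵥ y = t) : y = 0 := by
  have hspan : Submodule.span ℝ (Set.range fun j => α j -ᵥ α 0) = ⊤ := by
    rw [← vectorSpan_range_eq_span_range_vsub_right]
    exact AffineSubspace.vectorSpan_eq_top_of_affineSpan_eq_top _ _ _
      (hα.affineSpan_eq_top_iff_card_eq_finrank_add_one.2 (by simp))
  rw [← (dotProductEquiv ℝ (Fin n)).map_eq_zero_iff]
  refine LinearMap.ext_on_range hspan fun j => ?_
  simp [dotProduct_comm y, sub_dotProduct, h]

theorem eq_of_forall_dotProduct_eq_add (hα : AffineIndependent ℝ α) {b : Fin (n + 1) → ℝ}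
    {y y' : Fin n → ℝ} {t t' : ℝ} (h : ∀ j, α j ⬝ᵥ y = t + b j)
    (h' : ∀ j, α j ⬝ᵥ y' = t' + b j) : y = y' :=
  sub_eq_zero.1 <| hα.eq_zero_of_forall_dotProduct_eq (t := t - t') fun j => by
    rw [dotProduct_sub, h, h']
    ring

theorem exists_forall_dotProduct_eq_add (hα : AffineIndependent ℝ α) (b : Fin (n + 1) → ℝ) :
    ∃ y t, ∀ j, α j ⬝ᵥ y = t + b j := by
  let Φ : (Fin n → ℝ) × ℝ →ₗ[ℝ] Fin (n + 1) → ℝ :=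
    (of α).mulVecLin.coprod (LinearMap.toSpanSingleton ℝ _ 1)
  have hΦ : ∀ y s j, Φ (y, s) j = α j ⬝ᵥ y + s := fun y s j => by simp [Φ, mulVec]
  have hinj : Function.Injective Φ := by
    rw [← LinearMap.ker_eq_bot, LinearMap.ker_eq_bot']
    rintro ⟨y, s⟩ h
    have hy : y = 0 := hα.eq_zero_of_forall_dotProduct_eq (t := -s) fun j => by
      have hj := congrFun h j
      rw [hΦ, Pi.zero_apply] at hj
      linarith
    have hs : s = 0 := by simpa [hΦ, hy] using congrFun h 0
    rw [hy, hs, Prod.mk_zero_zero]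
  obtain ⟨⟨y, s⟩, hys⟩ :=
    (LinearMap.injective_iff_surjective_of_finrank_eq_finrank (by simp)).1 hinj b
  exact ⟨y, -s, fun j => by rw [← hys, hΦ]; ring⟩

theorem det_mul_diagonal_mul_ne_zero (hα : AffineIndependent ℝ α)
    {N : Matrix (Fin n) (Fin (n + 1)) ℝ} {v : Fin (n + 1) → ℝ} (hv : ∀ j, 0 < v j)
    (hker : ∀ u, N *ᵥ u = 0 → ∃ c : ℝ, u = c • v) : (N * diagonal v * of α).det ≠ 0 := by
  intro hdet
  obtain ⟨y, hy, hNy⟩ := exists_mulVec_eq_zero_iff.2 hdet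
  rw [← mulVec_mulVec, ← mulVec_mulVec] at hNy
  obtain ⟨s, hs⟩ := hker _ hNy
  refine hy (hα.eq_zero_of_forall_dotProduct_eq (t := s) fun j => ?_)
  have hj : v j * (α j ⬝ᵥ y) = s * v j := by simpa [mulVec_diagonal, mulVec] using congrFun hs j
  exact mul_right_cancel₀ (hv j).ne' (by linarith)

end AffineIndependent

theorem exists_pos_smul_eq_of_mulVec_eq_zero {m ι : Type*} [Fintype ι] [Nonempty ι]
    {N : Matrix m ι ℝ} {v w : ι → ℝ} (hv : ∀ j, 0 < v j)
    (hker : ∀ u, N *ᵥ u = 0 → ∃ c : ℝ, u = c • v) (hw : ∀ j, 0 < w j) (hNw : N *ᵥ w = 0) :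
    ∃ c : ℝ, 0 < c ∧ w = c • v := by
  obtain ⟨c, rfl⟩ := hker w hNw
  obtain ⟨j⟩ := ‹Nonempty ι›
  exact ⟨c, pos_of_mul_pos_left (hw j) (hv j).le, rfl⟩

noncomputable def monomialMap {ι κ : Type*} [Fintype κ] (α : ι → κ → ℝ) (x : κ → ℝ) : ι → ℝ :=
  fun j => ∏ k, x k ^ α j k

section
variable {ι κ : Type*} [Fintype κ] (α : ι → κ → ℝ)

theorem monomialMap_exp (y : κ → ℝ) :
    monomialMap α (fun k => exp (y k)) = fun j => exp (α j ⬝ᵥ y) := by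
  funext j
  simp only [monomialMap, dotProduct, exp_sum, ← exp_mul, mul_comm]

theorem monomialMap_pos {x : κ → ℝ} (hx : ∀ k, 0 < x k) (j : ι) : 0 < monomialMap α x j :=
  Finset.prod_pos fun k _ => rpow_pos_of_pos (hx k) _

variable [DecidableEq κ]

theorem hasFDerivAt_prod_rpow (a : κ → ℝ) {x : κ → ℝ} (hx : ∀ k, x k ≠ 0) :
    HasFDerivAt (fun x : κ → ℝ => ∏ k, x k ^ a k)
      (∑ k, (a k * (∏ l, x l ^ a l) / x k) •
        (ContinuousLinearMap.proj k : (κ → ℝ) →L[ℝ] ℝ)) x := by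
  refine (HasFDerivAt.finsetProd fun k _ =>
    (hasFDerivAt_apply k x).rpow_const (p := a k) (Or.inl (hx k))).congr_fderiv ?_
  refine Finset.sum_congr rfl fun k _ => ?_
  rw [smul_smul, ← Finset.mul_prod_erase _ _ (Finset.mem_univ k), rpow_sub_one (hx k)]
  field_simp

variable [Fintype ι] [DecidableEq ι]

theorem hasFDerivAt_monomialMap {x : κ → ℝ} (hx : ∀ k, x k ≠ 0) :
    HasFDerivAt (monomialMap α) (LinearMap.toContinuousLinearMap
      (toLin' (diagonal (monomialMap α x) * of α * diagonal fun k => (x k)⁻¹))) x := by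
  refine hasFDerivAt_pi'' fun j => (hasFDerivAt_prod_rpow (α j) hx).congr_fderiv ?_
  ext y
  simp only [div_eq_mul_inv, _root_.sum_apply, _root_.smul_apply, ContinuousLinearMap.proj_apply,
    smul_eq_mul, ContinuousLinearMap.comp_apply, LinearMap.coe_toContinuousLinearMap', toLin'_apply,
    mulVec, dotProduct, diagonal_mul, monomialMap, mul_diagonal, of_apply]
  exact Finset.sum_congr rfl fun k _ => by ring

theorem det_fderiv_mulVec_monomialMap (N : Matrix κ ι ℝ) {x : κ → ℝ} (hx : ∀ k, x k ≠ 0) :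
    LinearMap.det (fderiv ℝ (fun x => N *ᵥ monomialMap α x) x : (κ → ℝ) →ₗ[ℝ] κ → ℝ) =
      (N * diagonal (monomialMap α x) * of α * diagonal fun k => (x k)⁻¹).det := by
  have hF : HasFDerivAt (fun x => N *ᵥ monomialMap α x) ((LinearMap.toContinuousLinearMap
      (toLin' N)).comp _) x :=
    (LinearMap.toContinuousLinearMap (toLin' N)).hasFDerivAt.comp x (hasFDerivAt_monomialMap α hx)
  rw [hF.fderiv]
  simp [← LinearMap.det_toLin', Matrix.mul_assoc]

end

theorem mulVec_monomialMap_exp_eq_zero_iff {m ι κ : Type*} [Fintype ι] [Nonempty ι] [Fintype κ]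
    (α : ι → κ → ℝ) {N : Matrix m ι ℝ} {v : ι → ℝ} (hv : ∀ j, 0 < v j) (hvker : N *ᵥ v = 0)
    (hker : ∀ u, N *ᵥ u = 0 → ∃ c : ℝ, u = c • v) (y : κ → ℝ) :
    N *ᵥ monomialMap α (fun k => exp (y k)) = 0 ↔ ∃ t, ∀ j, α j ⬝ᵥ y = t + log (v j) := by
  rw [monomialMap_exp]
  constructor
  · intro h
    obtain ⟨c, hc, hcv⟩ := exists_pos_smul_eq_of_mulVec_eq_zero hv hker (fun j => exp_pos _) h
    refine ⟨log c, fun j => ?_⟩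
    rw [← log_mul hc.ne' (hv j).ne', ← smul_eq_mul, ← Pi.smul_apply, ← hcv, log_exp]
  · rintro ⟨t, ht⟩
    have : (fun j => exp (α j ⬝ᵥ y)) = exp t • v := by
      funext j
      rw [ht, exp_add, exp_log (hv j), Pi.smul_apply, smul_eq_mul]
    rw [this, mulVec_smul, hvker, smul_zero]

/-- Let `Δ = {α₁,…,α_{n+1}}` be an `n`-simplex (affinely independent
points of `ℝ^n`) and `N_Δ ∈ ℝ^{n×(n+1)}` a matrix whose kernel is one-dimensional and
meets the positive orthant (i.e. `N` positively decorates `Δ`). Then the system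
`N_Δ x^{A_Δ} = 0` has exactly one solution in `ℝ^n_{>0}`, and this solution is
non-degenerate: the Jacobian (Fréchet derivative) of `x ↦ N_Δ x^{A_Δ}` there is
invertible. -/
theorem stmt16 {n : ℕ} (α : Fin (n + 1) → (Fin n → ℝ))
    (haff : AffineIndependent ℝ α)
    (N : Matrix (Fin n) (Fin (n + 1)) ℝ)
    (v : Fin (n + 1) → ℝ) (hv : ∀ j, 0 < v j) (hvker : N.mulVec v = 0)
    (hker : ∀ u : Fin (n + 1) → ℝ, N.mulVec u = 0 → ∃ c : ℝ, u = c • v) :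
    let F : (Fin n → ℝ) → (Fin n → ℝ) :=
      fun x i => ∑ j, N i j * ∏ k, x k ^ α j k
    (∃! x : Fin n → ℝ, (∀ k, 0 < x k) ∧ F x = 0) ∧
    (∀ x : Fin n → ℝ, (∀ k, 0 < x k) → F x = 0 →
      LinearMap.det ((fderiv ℝ F x : (Fin n → ℝ) →L[ℝ] (Fin n → ℝ)) :
        (Fin n → ℝ) →ₗ[ℝ] (Fin n → ℝ)) ≠ 0) := by
  intro F
  have hF : F = fun x => N *ᵥ monomialMap α x := rfl
  rw [hF]
  have hzero := mulVec_monomialMap_exp_eq_zero_iff α hv hvker hker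
  obtain ⟨y₀, t₀, hy₀⟩ := haff.exists_forall_dotProduct_eq_add fun j => log (v j)
  refine ⟨⟨fun k => exp (y₀ k), ⟨fun k => exp_pos _, (hzero y₀).2 ⟨t₀, hy₀⟩⟩, ?_⟩, ?_⟩
  · rintro x ⟨hx, hFx⟩
    have hxlog : x = fun k => exp (log (x k)) := funext fun k => (exp_log (hx k)).symm
    rw [hxlog] at hFx ⊢
    obtain ⟨t, ht⟩ := (hzero _).1 hFx
    exact congrArg (fun y k => exp (y k)) (haff.eq_of_forall_dotProduct_eq_add ht hy₀)
  · intro x hx hFx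
    obtain ⟨c, hc, hcv⟩ :=
      exists_pos_smul_eq_of_mulVec_eq_zero hv hker (fun j => monomialMap_pos α hx j) hFx
    rw [det_fderiv_mulVec_monomialMap α N fun k => (hx k).ne', hcv, diagonal_smul,
      Matrix.mul_smul, Matrix.smul_mul, det_mul, det_smul, det_diagonal]
    exact mul_ne_zero
      (mul_ne_zero (pow_ne_zero _ hc.ne') (haff.det_mul_diagonal_mul_ne_zero hv hker))
      (Finset.prod_ne_zero_iff.2 fun k _ => inv_ne_zero (hx k).ne')
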